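/- Let a ⊆ R = K[X_1,…,X_n] be a proper monomial ideal supported at the origin, and set t := inf{μ > 0 : μ·(1,…,1) ∈ P_a}, so that the log canonical threshold of a is lc(a) = 1/t. Then e(a) ≥ n^n/lc(a)^n, i.e., e(a) ≥ (n·t)^n. -/

import Mathlib

open Filter MvPolynomial
open scoped Pointwise

/-- An ideal of `K[X_1,…,X_n]` is supported at the origin if it contains a power
of the maximal ideal `(X_1,…,X_n)`. -/
def SupportedAtOrigin {K : Type*} [Field K] {n : ℕ}
    (a : Ideal (MvPolynomial (Fin n) K)) : Prop :=
  ∃ k : ℕ, (Ideal.span (Set.range (X : Fin n → MvPolynomial (Fin n) K))) ^ k ≤ a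

/-- The multiplicity `e(a) = limsup_k n!·dim_K(R/a^k)/k^n` of an ideal of
`K[X_1,…,X_n]` supported at the origin. -/
noncomputable def polyMult {K : Type*} [Field K] {n : ℕ}
    (a : Ideal (MvPolynomial (Fin n) K)) : ℝ :=
  limsup (fun k : ℕ =>
    (Nat.factorial n * Module.finrank K (MvPolynomial (Fin n) K ⧸ a ^ k) : ℝ) / (k : ℝ) ^ n) atTop

/-- The multiplicity `e(a_•) = limsup_m e(a_m)/m^n` of a sequence of ideals. -/
noncomputable def polyMultSeq {K : Type*} [Field K] {n : ℕ}
    (a : ℕ → Ideal (MvPolynomial (Fin n) K)) : ℝ :=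
  limsup (fun m : ℕ => polyMult (a m) / (m : ℝ) ^ n) atTop

/-- The volume `vol(a_•) = limsup_m n!·dim_K(R/a_m)/m^n` of a sequence of ideals. -/
noncomputable def polyVolSeq {K : Type*} [Field K] {n : ℕ}
    (a : ℕ → Ideal (MvPolynomial (Fin n) K)) : ℝ :=
  limsup (fun m : ℕ =>
    (Nat.factorial n * Module.finrank K (MvPolynomial (Fin n) K ⧸ a m) : ℝ) / (m : ℝ) ^ n) atTop

/-- A monomial ideal: an ideal generated by the monomials it contains. -/
def IsMonomialIdeal {K : Type*} [Field K] {n : ℕ}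
    (a : Ideal (MvPolynomial (Fin n) K)) : Prop :=
  a = Ideal.span ((fun v : Fin n →₀ ℕ => (monomial v (1 : K) : MvPolynomial (Fin n) K)) ''
        {v : Fin n →₀ ℕ | monomial v (1 : K) ∈ a})

/-- The Newton polyhedron of a (monomial) ideal: the convex hull in `ℝ^n` of the
exponents of the monomials lying in the ideal. -/
def newton {K : Type*} [Field K] {n : ℕ} (a : Ideal (MvPolynomial (Fin n) K)) :
    Set (Fin n → ℝ) :=
  convexHull ℝ ((fun v : Fin n →₀ ℕ => fun i => (v i : ℝ)) ''
    {v : Fin n →₀ ℕ | monomial v (1 : K) ∈ a})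

/-- The multiplier ideal `I(λ·a)` of a monomial ideal `a`: it is generated by the
monomials `X^u` with `u + e ∈ Int(λ·P_a)`, where `e = (1,…,1)`. -/
noncomputable def multiplierIdeal {K : Type*} [Field K] {n : ℕ} (lam : ℝ)
    (a : Ideal (MvPolynomial (Fin n) K)) : Ideal (MvPolynomial (Fin n) K) :=
  Ideal.span ((fun v : Fin n →₀ ℕ => (monomial v (1 : K) : MvPolynomial (Fin n) K)) ''
    {v : Fin n →₀ ℕ | (fun i => (v i : ℝ) + 1) ∈ interior (lam • newton a)})

/-- The asymptotic multiplier ideal `b_m = I(m·‖a_•‖)` of a graded sequence of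
monomial ideals: it is generated by the monomials `X^u` with
`u + e ∈ Int((m/p)·P_{a_p})` for some `p ≥ 1`. -/
noncomputable def asympMultiplierIdeal {K : Type*} [Field K] {n : ℕ}
    (a : ℕ → Ideal (MvPolynomial (Fin n) K)) (m : ℕ) : Ideal (MvPolynomial (Fin n) K) :=
  Ideal.span ((fun v : Fin n →₀ ℕ => (monomial v (1 : K) : MvPolynomial (Fin n) K)) ''
    {v : Fin n →₀ ℕ | ∃ p : ℕ, 1 ≤ p ∧
      (fun i => (v i : ℝ) + 1) ∈ interior (((m : ℝ) / (p : ℝ)) • newton (a p))})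

/-- The exponent of the leading monomial of `f` with respect to a monomial order. -/
noncomputable def leadExp {K : Type*} [Field K] {n : ℕ} (mo : MonomialOrder (Fin n))
    (f : MvPolynomial (Fin n) K) : Fin n →₀ ℕ :=
  mo.toSyn.symm (f.support.sup mo.toSyn)

/-- The initial ideal `in_>(a)`: the monomial ideal generated by the leading
monomials of the nonzero elements of `a`. -/
noncomputable def initialIdeal {K : Type*} [Field K] {n : ℕ} (mo : MonomialOrder (Fin n))
    (a : Ideal (MvPolynomial (Fin n) K)) : Ideal (MvPolynomial (Fin n) K) :=
  Ideal.span ((fun f : MvPolynomial (Fin n) K =>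
      (monomial (leadExp mo f) (1 : K) : MvPolynomial (Fin n) K)) ''
    {f : MvPolynomial (Fin n) K | f ∈ a ∧ f ≠ 0})


/-!
For `0 ≤ s < t` the point `s·(1,…,1)` lies outside the closure of the Newton polyhedron `P_a`
(an upper set), so a hyperplane separates them: there is `μ > 0` with `⟨μ, x⟩ ≥ 1` on `P_a` and
`⟨μ, s·(1,…,1)⟩ < 1`. Every exponent of `a^k` then has `⟨μ, u⟩ ≥ k`, so the monomials `X^u` with
`⟨μ, u⟩ < k` stay linearly independent modulo `a^k`; counting these lattice points gives
`n!·dim_K(R/a^k) ≥ k^n/∏ μ_i`. By AM-GM, `1/∏ μ_i ≥ (n·s)^n`, and `s → t` gives the bound.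
-/

open Finset in
theorem prod_le_sum_div_card_pow {ι : Type*} (s : Finset ι) {z : ι → ℝ}
    (hz : ∀ i ∈ s, 0 ≤ z i) : ∏ i ∈ s, z i ≤ ((∑ i ∈ s, z i) / #s) ^ #s := by
  rcases s.eq_empty_or_nonempty with rfl | hs
  · simp
  have hcard : (0 : ℝ) < #s := by exact_mod_cast hs.card_pos
  have hmean := Real.geom_mean_le_arith_mean_weighted s (fun _ => (#s : ℝ)⁻¹) z
    (fun _ _ => by positivity) (by simp [hcard.ne']) hz
  calc ∏ i ∈ s, z i = (∏ i ∈ s, z i ^ (#s : ℝ)⁻¹) ^ #s := by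
        rw [← prod_pow]
        refine prod_congr rfl fun i hi => ?_
        rw [← Real.rpow_natCast, ← Real.rpow_mul (hz i hi), inv_mul_cancel₀ hcard.ne',
          Real.rpow_one]
    _ ≤ ((∑ i ∈ s, z i) / #s) ^ #s := by
        gcongr
        · exact prod_nonneg fun i hi => Real.rpow_nonneg (hz i hi) _
        · simpa [← mul_sum, div_eq_inv_mul] using hmean

def latticeSimplex {ι : Type*} [Fintype ι] (μ : ι → ℝ) (s : ℝ) : Set (ι → ℕ) :=
  {u | ∑ i, μ i * u i < s}

theorem latticeSimplex_finite {ι : Type*} [Fintype ι] {μ : ι → ℝ} (hμ : ∀ i, 0 < μ i) (s : ℝ) :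
    (latticeSimplex μ s).Finite := by
  refine (Set.Finite.pi fun i => Set.finite_Iic ⌊s / μ i⌋₊).subset fun u hu i _ => ?_
  refine Nat.le_floor ((le_div_iff₀' (hμ i)).2 (hu.le.trans' ?_))
  exact Finset.single_le_sum (fun j _ => mul_nonneg (hμ j).le (Nat.cast_nonneg _))
    (Finset.mem_univ i)

open Finset in
/-- The right side is an upper Riemann sum for `∫₀ˢ (m + 1) (s - x)ᵐ dx = s ^ (m + 1)`. -/
theorem pow_succ_le_mul_sum_sub_mul_pow {c s : ℝ} (hc : 0 < c) (hs : 0 ≤ s) (m : ℕ) :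
    s ^ (m + 1) ≤ (m + 1) * c * ∑ j ∈ range ⌈s / c⌉₊, (s - c * j) ^ m := by
  set A : ℕ → ℝ := fun j => max (s - c * j) 0
  have hA0 : A 0 = s := by simp [A, hs]
  have hAN : A ⌈s / c⌉₊ = 0 :=
    max_eq_right (sub_nonpos.2 ((div_le_iff₀' hc).1 (Nat.le_ceil _)))
  have hstep : ∀ j ∈ range ⌈s / c⌉₊,
      A j ^ (m + 1) - A (j + 1) ^ (m + 1) ≤ (m + 1) * c * (s - c * j) ^ m := by
    intro j hj
    have hAj : A j = s - c * j :=
      max_eq_left (sub_nonneg.2 ((lt_div_iff₀' hc).1 (Nat.lt_ceil.1 (mem_range.1 hj))).le)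
    have hA_nonneg : ∀ j, 0 ≤ A j := fun j => le_max_right _ _
    have hAj' : A (j + 1) ≤ A j := max_le_max_right _ (by push_cast; nlinarith)
    have hgap : |A j - A (j + 1)| ≤ c := by
      refine (abs_max_sub_max_le_abs _ _ _).trans_eq ?_
      rw [abs_of_nonneg] <;> push_cast <;> linarith
    calc A j ^ (m + 1) - A (j + 1) ^ (m + 1)
        ≤ |A j - A (j + 1)| * (m + 1 : ℕ) * max |A j| |A (j + 1)| ^ (m + 1 - 1) :=
          (le_abs_self _).trans (abs_pow_sub_pow_le _ _ _)
      _ ≤ c * (m + 1) * (s - c * j) ^ m := by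
          rw [abs_of_nonneg (hA_nonneg j), abs_of_nonneg (hA_nonneg (j + 1)),
            max_eq_left hAj', hAj, Nat.add_sub_cancel]
          push_cast
          have := hAj ▸ hA_nonneg j
          gcongr
          exact hAj ▸ hgap
      _ = (m + 1) * c * (s - c * j) ^ m := by ring
  calc s ^ (m + 1) = ∑ j ∈ range ⌈s / c⌉₊, (A j ^ (m + 1) - A (j + 1) ^ (m + 1)) := by
        rw [sum_range_sub', hA0, hAN, zero_pow m.succ_ne_zero, sub_zero]
    _ ≤ _ := by rw [mul_sum]; exact sum_le_sum hstep

theorem sum_ncard_latticeSimplex_tail_le {m : ℕ} {μ : Fin (m + 1) → ℝ} (hμ : ∀ i, 0 < μ i)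
    (s : ℝ) (N : ℕ) :
    ∑ j ∈ Finset.range N, (latticeSimplex (Fin.tail μ) (s - μ 0 * j)).ncard
      ≤ (latticeSimplex μ s).ncard := by
  have (j : Fin N) : Finite (latticeSimplex (Fin.tail μ) (s - μ 0 * j)) :=
    (latticeSimplex_finite (fun i : Fin m => hμ i.succ) _).to_subtype
  have := (latticeSimplex_finite hμ s).to_subtype
  let cons : (Σ j : Fin N, latticeSimplex (Fin.tail μ) (s - μ 0 * j)) → latticeSimplex μ s :=
    fun v => ⟨Fin.cons (v.1 : ℕ) v.2.1, by
      have := v.2.2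
      simp only [latticeSimplex, Set.mem_ofPred_eq, Fin.sum_univ_succ, Fin.cons_zero,
        Fin.cons_succ] at this ⊢
      exact lt_sub_iff_add_lt'.1 this⟩
  have hcons : cons.Injective := by
    rintro ⟨j, v⟩ ⟨j', v'⟩ h
    have h' : (Fin.cons (j : ℕ) v.1 : Fin (m + 1) → ℕ) = Fin.cons (j' : ℕ) v'.1 :=
      congrArg Subtype.val h
    obtain ⟨hj, hv⟩ := Fin.cons_injective2 h'
    obtain rfl : j = j' := Fin.ext hj
    simp only [Sigma.mk.injEq, heq_eq_eq, true_and]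
    exact Subtype.ext hv
  calc _ = Nat.card (Σ j : Fin N, latticeSimplex (Fin.tail μ) (s - μ 0 * j)) := by
        rw [Nat.card_sigma, ← Fin.sum_univ_eq_sum_range (fun j =>
          (latticeSimplex (Fin.tail μ) (s - μ 0 * j)).ncard)]
        simp only [Nat.card_coe_set_eq]
    _ ≤ _ := (Nat.card_le_card_of_injective cons hcons).trans_eq (Nat.card_coe_set_eq _)

open Nat in
theorem pow_le_factorial_mul_prod_mul_ncard_latticeSimplex :
    ∀ {m : ℕ} {μ : Fin m → ℝ}, (∀ i, 0 < μ i) → ∀ {s : ℝ}, 0 < s →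
      s ^ m ≤ m ! * (∏ i, μ i) * (latticeSimplex μ s).ncard
  | 0, μ, _, s, hs => by simp [latticeSimplex, hs]
  | m + 1, μ, hμ, s, hs => by
    have hIH : ∀ j ∈ Finset.range ⌈s / μ 0⌉₊, (s - μ 0 * j) ^ m ≤
        m ! * (∏ i, Fin.tail μ i) * (latticeSimplex (Fin.tail μ) (s - μ 0 * j)).ncard :=
      fun j hj => pow_le_factorial_mul_prod_mul_ncard_latticeSimplex (fun i : Fin m => hμ i.succ)
        (sub_pos.2 ((lt_div_iff₀' (hμ 0)).1 (Nat.lt_ceil.1 (Finset.mem_range.1 hj))))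
    calc s ^ (m + 1) ≤ (m + 1) * μ 0 * ∑ j ∈ Finset.range ⌈s / μ 0⌉₊, (s - μ 0 * j) ^ m :=
          pow_succ_le_mul_sum_sub_mul_pow (hμ 0) hs.le m
      _ ≤ (m + 1) * μ 0 * ∑ j ∈ Finset.range ⌈s / μ 0⌉₊,
            m ! * (∏ i, Fin.tail μ i) * (latticeSimplex (Fin.tail μ) (s - μ 0 * j)).ncard := by
          have := hμ 0
          gcongr with j hj
          exact hIH j hj
      _ = (m + 1)! * (∏ i, μ i) * ((∑ j ∈ Finset.range ⌈s / μ 0⌉₊,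
            (latticeSimplex (Fin.tail μ) (s - μ 0 * j)).ncard : ℕ) : ℝ) := by
          rw [Fin.prod_univ_succ, Nat.factorial_succ, Nat.cast_sum, Finset.mul_sum, Finset.mul_sum]
          refine Finset.sum_congr rfl fun j _ => ?_
          simp only [Fin.tail]
          push_cast
          ring
      _ ≤ (m + 1)! * (∏ i, μ i) * (latticeSimplex μ s).ncard := by
          have := Finset.prod_pos fun i (_ : i ∈ Finset.univ) => hμ i
          gcongr
          exact sum_ncard_latticeSimplex_tail_le hμ s _

theorem Finsupp.weight_nonneg {σ : Type*} {μ : σ → ℝ} (hμ : ∀ i, 0 ≤ μ i) (u : σ →₀ ℕ) :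
    0 ≤ weight μ u :=
  Finset.sum_nonneg fun i _ => nsmul_nonneg (hμ i) _

theorem Finsupp.weight_mono {σ : Type*} {μ : σ → ℝ} (hμ : ∀ i, 0 ≤ μ i) {u v : σ →₀ ℕ}
    (huv : u ≤ v) : weight μ u ≤ weight μ v := by
  rw [← add_tsub_cancel_of_le huv, map_add]
  exact le_add_of_nonneg_right (weight_nonneg hμ _)

theorem Finsupp.weight_eq_sum_mul {σ : Type*} [Fintype σ] (μ : σ → ℝ) (u : σ →₀ ℕ) :
    weight μ u = ∑ i, μ i * u i := by
  simp [weight_eq_sum, nsmul_eq_mul, mul_comm]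

section QuotientDimension

variable {K σ : Type*} [Field K]

theorem monomial_mem_of_X_pow_mem {b : Ideal (MvPolynomial σ K)} {D : ℕ}
    (hb : ∀ i, X i ^ D ∈ b) : ∀ u ∉ {u : σ →₀ ℕ | ∀ i, u i < D}, monomial u (1 : K) ∈ b := by
  intro u hu
  obtain ⟨i, hi⟩ := not_forall.1 hu
  rw [← tsub_add_cancel_of_le (Finsupp.single_le_iff.2 (not_lt.1 hi)), ← mul_one (1 : K),
    ← monomial_mul, ← X_pow_eq_monomial]
  exact b.mul_mem_left _ (hb i)

theorem ncard_le_finrank_quotient {b : Ideal (MvPolynomial σ K)}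
    [Module.Finite K (MvPolynomial σ K ⧸ b)] {S : Set (σ →₀ ℕ)}
    (hS : ∀ f ∈ b, f ∈ restrictSupport K S → f = 0) :
    S.ncard ≤ Module.finrank K (MvPolynomial σ K ⧸ b) := by
  have hinj : Function.Injective
      ((Ideal.Quotient.mkₐ K b).toLinearMap ∘ₗ (restrictSupport K S).subtype) := by
    refine (injective_iff_map_eq_zero _).2 fun f hf => Subtype.ext ?_
    exact hS f (Ideal.Quotient.eq_zero_iff_mem.1 hf) f.2
  rw [← Nat.card_coe_set_eq, ← Module.finrank_eq_nat_card_basis (basisRestrictSupport K S)]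
  exact LinearMap.finrank_le_finrank_of_injective hinj

theorem mkₐ_comp_restrictSupport_surjective {b : Ideal (MvPolynomial σ K)} {S : Set (σ →₀ ℕ)}
    (hS : ∀ u ∉ S, monomial u (1 : K) ∈ b) :
    Function.Surjective
      ((Ideal.Quotient.mkₐ K b).toLinearMap ∘ₗ (restrictSupport K S).subtype) := by
  rw [← LinearMap.range_eq_top, LinearMap.range_comp, Submodule.range_subtype, eq_top_iff,
    ← (LinearMap.range_eq_top (f := (Ideal.Quotient.mkₐ K b).toLinearMap)).2
      (Ideal.Quotient.mkₐ_surjective K b), LinearMap.range_eq_map,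
    ← restrictSupport_univ, restrictSupport_eq_span, Submodule.map_span_le]
  rintro _ ⟨u, -, rfl⟩
  by_cases hu : u ∈ S
  · exact Submodule.mem_map_of_mem (by simp [hu])
  · simp [Ideal.Quotient.eq_zero_iff_mem.2 (hS u hu)]

theorem setOf_forall_lt_finite_and_ncard_le [Fintype σ] (D : ℕ) :
    {u : σ →₀ ℕ | ∀ i, u i < D}.Finite ∧
      {u : σ →₀ ℕ | ∀ i, u i < D}.ncard ≤ D ^ Fintype.card σ := by
  let digits : {u : σ →₀ ℕ | ∀ i, u i < D} → (σ → Fin D) := fun u i => ⟨u.1 i, u.2 i⟩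
  have hdigits : digits.Injective := fun u v h =>
    Subtype.ext (Finsupp.ext fun i => congrArg Fin.val (congrFun h i))
  refine ⟨Set.finite_coe_iff.1 (Finite.of_injective digits hdigits), ?_⟩
  rw [← Nat.card_coe_set_eq]
  refine (Nat.card_le_card_of_injective digits hdigits).trans_eq ?_
  rw [Nat.card_fun, Nat.card_fin, Nat.card_eq_fintype_card]

theorem finite_quotient_of_X_pow_mem [Fintype σ] {b : Ideal (MvPolynomial σ K)} {D : ℕ}
    (hb : ∀ i, X i ^ D ∈ b) : Module.Finite K (MvPolynomial σ K ⧸ b) := by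
  have := (setOf_forall_lt_finite_and_ncard_le (σ := σ) D).1.to_subtype
  have := Module.Finite.of_basis (basisRestrictSupport K {u : σ →₀ ℕ | ∀ i, u i < D})
  exact Module.Finite.of_surjective _
    (mkₐ_comp_restrictSupport_surjective (monomial_mem_of_X_pow_mem hb))

theorem finrank_quotient_le_of_X_pow_mem [Fintype σ] {b : Ideal (MvPolynomial σ K)} {D : ℕ}
    (hb : ∀ i, X i ^ D ∈ b) :
    Module.finrank K (MvPolynomial σ K ⧸ b) ≤ D ^ Fintype.card σ := by
  have := (setOf_forall_lt_finite_and_ncard_le (σ := σ) D).1.to_subtype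
  have := Module.Finite.of_basis (basisRestrictSupport K {u : σ →₀ ℕ | ∀ i, u i < D})
  calc Module.finrank K (MvPolynomial σ K ⧸ b)
      ≤ Module.finrank K (restrictSupport K {u : σ →₀ ℕ | ∀ i, u i < D}) :=
        LinearMap.finrank_le_finrank_of_surjective
          (mkₐ_comp_restrictSupport_surjective (monomial_mem_of_X_pow_mem hb))
    _ = {u : σ →₀ ℕ | ∀ i, u i < D}.ncard := by
        rw [Module.finrank_eq_nat_card_basis (basisRestrictSupport K _), Nat.card_coe_set_eq]
    _ ≤ D ^ Fintype.card σ := (setOf_forall_lt_finite_and_ncard_le D).2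

theorem mem_restrictSupport_of_mem_pow {μ : σ → ℝ} (hμ : ∀ i, 0 ≤ μ i)
    {a : Ideal (MvPolynomial σ K)}
    (ha : ∀ f ∈ a, f ∈ restrictSupport K {u : σ →₀ ℕ | 1 ≤ Finsupp.weight μ u}) (k : ℕ) :
    ∀ f ∈ a ^ k, f ∈ restrictSupport K {u : σ →₀ ℕ | (k : ℝ) ≤ Finsupp.weight μ u} := by
  induction k with
  | zero =>
    intro f _
    simp [Finsupp.weight_nonneg hμ]
  | succ k ih =>
    intro f hf
    rw [pow_succ] at hf
    refine Submodule.mul_induction_on hf (fun x hx y hy => ?_) fun _ _ => add_mem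
    refine restrictSupport_mono K ?_
      (restrictSupport_add K _ _ ▸ Submodule.mul_mem_mul (ih x hx) (ha y hy))
    rintro _ ⟨u, hu, v, hv, rfl⟩
    simp only [Set.mem_ofPred_eq, map_add, Nat.cast_succ] at hu hv ⊢
    linarith

end QuotientDimension

theorem IsMonomialIdeal.mem_restrictSupport {K : Type*} [Field K] {n : ℕ}
    {a : Ideal (MvPolynomial (Fin n) K)} (hmon : IsMonomialIdeal a) {μ : Fin n → ℝ}
    (hμ : ∀ i, 0 ≤ μ i) {r : ℝ}
    (h : ∀ v : Fin n →₀ ℕ, monomial v (1 : K) ∈ a → r ≤ Finsupp.weight μ v) :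
    ∀ f ∈ a, f ∈ restrictSupport K {u : Fin n →₀ ℕ | r ≤ Finsupp.weight μ u} := by
  intro f hf u hu
  rw [hmon] at hf
  obtain ⟨v, hv, hvu⟩ := mem_ideal_span_monomial_image.1 hf u hu
  exact (h v hv).trans (Finsupp.weight_mono hμ hvu)

section Newton

variable {K : Type*} [Field K] {n : ℕ} {a : Ideal (MvPolynomial (Fin n) K)}

theorem add_natCast_mem_newton {x : Fin n → ℝ} (hx : x ∈ newton a) (w : Fin n →₀ ℕ) :
    x + (fun i => (w i : ℝ)) ∈ newton a := by
  refine convexHull_min ?_ ((convex_convexHull ℝ _).translate_preimage_left _) hx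
  rintro _ ⟨v, hv, rfl⟩
  refine subset_convexHull ℝ _ ⟨v + w, ?_, by ext; simp⟩
  rw [Set.mem_ofPred_eq, ← mul_one (1 : K), ← monomial_mul]
  exact a.mul_mem_right _ hv

theorem add_single_mem_newton {x : Fin n → ℝ} (hx : x ∈ newton a) (i : Fin n) {r : ℝ}
    (hr : 0 ≤ r) : x + Pi.single i r ∈ newton a := by
  set m : ℕ := ⌊r⌋₊ + 1
  have hm : r < m := by simpa [m] using Nat.lt_floor_add_one r
  have hxm : x + Pi.single i (m : ℝ) ∈ newton a := by
    convert add_natCast_mem_newton hx (Finsupp.single i m) using 2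
    ext j
    by_cases hj : j = i <;> simp [hj]
  have := (convex_convexHull ℝ _).add_smul_mem hx hxm
    ⟨div_nonneg hr (by positivity), (div_le_one (by positivity)).2 hm.le⟩
  rwa [← Pi.single_smul, smul_eq_mul, div_mul_cancel₀ _ (by positivity)] at this

theorem isUpperSet_newton (a : Ideal (MvPolynomial (Fin n) K)) : IsUpperSet (newton a) := by
  intro x y hxy hx
  have key : ∀ s : Finset (Fin n), x + ∑ i ∈ s, Pi.single i (y i - x i) ∈ newton a := by
    intro s
    induction s using Finset.induction_on with
    | empty => simpa using hx
    | insert i s hi ih =>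
      rw [Finset.sum_insert hi, add_left_comm, add_comm]
      exact add_single_mem_newton ih i (sub_nonneg.2 (hxy i))
  convert key Finset.univ using 1
  rw [Finset.univ_sum_single (fun i => y i - x i)]
  ext i
  simp

theorem exists_pos_weight_of_notMem_closure_newton {D : ℕ} (hD : ∀ i, X i ^ D ∈ a)
    {p : Fin n → ℝ} (hp : 0 ≤ p) (hpa : p ∉ closure (newton a)) :
    ∃ μ : Fin n → ℝ, (∀ i, 0 < μ i) ∧ (∀ x ∈ newton a, 1 ≤ ∑ i, μ i * x i) ∧
      ∑ i, μ i * p i < 1 := by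
  obtain ⟨f, u, hfp, hfa⟩ :=
    geometric_hahn_banach_point_closed (convex_convexHull ℝ _).closure isClosed_closure hpa
  set l : Fin n → ℝ := fun i => f (Pi.single i 1)
  have hf : ∀ x, f x = ∑ i, l i * x i := fun x => by
    conv_lhs => rw [← Finset.univ_sum_single x]
    refine (map_sum f _ _).trans (Finset.sum_congr rfl fun i _ => ?_)
    rw [show Pi.single i (x i) = x i • Pi.single i (1 : ℝ) by
      rw [← Pi.single_smul, smul_eq_mul, mul_one], map_smul, smul_eq_mul, mul_comm]
  have hsingle : ∀ i, ∀ r : ℝ, 0 ≤ r → u < (D + r) * l i := by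
    intro i r hr
    have hDi : Pi.single i (D : ℝ) ∈ newton a := by
      refine subset_convexHull ℝ _ ⟨Finsupp.single i D, ?_, ?_⟩
      · rw [Set.mem_ofPred_eq, ← X_pow_eq_monomial]
        exact hD i
      ext j
      by_cases hj : j = i <;> simp [hj]
    have := hfa _ (subset_closure (add_single_mem_newton hDi i hr))
    simpa [hf, ← Pi.single_add, Pi.single_apply, mul_comm] using this
  have hl : ∀ i, 0 ≤ l i := by
    intro i
    by_contra! h
    have := hsingle i (|u| / -l i) (div_nonneg (abs_nonneg u) (neg_nonneg.2 h.le))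
    rw [add_mul, div_mul_eq_mul_div, div_neg, mul_div_assoc, div_self h.ne, mul_one] at this
    nlinarith [neg_abs_le u, Nat.cast_nonneg (α := ℝ) D]
  have hu : 0 < u := (hf p ▸ Finset.sum_nonneg fun i _ => mul_nonneg (hl i) (hp i)).trans_lt hfp
  refine ⟨fun i => l i / u, fun i => div_pos ?_ hu, fun x hx => ?_, ?_⟩
  · exact pos_of_mul_pos_right (hu.trans (by simpa using hsingle i 0 le_rfl)) (Nat.cast_nonneg D)
  · have := hfa x (subset_closure hx)
    simp only [div_mul_eq_mul_div, ← Finset.sum_div, hf] at this ⊢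
    exact (one_le_div hu).2 this.le
  · simp only [div_mul_eq_mul_div, ← Finset.sum_div, ← hf]
    exact (div_lt_one hu).2 hfp

theorem notMem_closure_newton_of_lt_sInf {s : ℝ} (hs : 0 ≤ s)
    (hst : s < sInf {μ : ℝ | 0 < μ ∧ (fun _ : Fin n => μ) ∈ newton a}) :
    (fun _ : Fin n => s) ∉ closure (newton a) := fun h => by
  have hbdd : BddBelow {μ : ℝ | 0 < μ ∧ (fun _ : Fin n => μ) ∈ newton a} :=
    ⟨0, fun μ hμ => hμ.1.le⟩
  obtain ⟨s', hss', hs't⟩ := exists_between hst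
  have hmem : (fun _ : Fin n => s') ∈ newton a :=
    interior_subset ((isUpperSet_newton a).mem_interior_of_forall_lt h fun _ => hss')
  exact (csInf_le hbdd ⟨hs.trans_lt hss', hmem⟩).not_gt hs't

end Newton

section Multiplicity

open Module Nat

variable {K : Type*} [Field K] {n : ℕ} {a : Ideal (MvPolynomial (Fin n) K)}

theorem SupportedAtOrigin.exists_X_pow_mem (h : SupportedAtOrigin a) :
    ∃ D, ∀ i, X i ^ D ∈ a :=
  let ⟨D, hD⟩ := h
  ⟨D, fun i => hD (Ideal.pow_mem_pow (Ideal.subset_span (Set.mem_range_self i)) D)⟩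

theorem X_pow_mul_mem_pow {D : ℕ} (hD : ∀ i, X i ^ D ∈ a) (k : ℕ) (i : Fin n) :
    X i ^ (D * k) ∈ a ^ k := by
  rw [pow_mul]
  exact Ideal.pow_mem_pow (hD i) k

theorem isBoundedUnder_factorial_mul_finrank_div {D : ℕ} (hD : ∀ i, X i ^ D ∈ a) :
    IsBoundedUnder (· ≤ ·) atTop fun k : ℕ =>
      (n ! * finrank K (MvPolynomial (Fin n) K ⧸ a ^ k) : ℝ) / (k : ℝ) ^ n := by
  refine isBoundedUnder_of_eventually_le (a := n ! * (D : ℝ) ^ n)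
    (eventually_atTop.2 ⟨1, fun k hk => ?_⟩)
  have hrank := finrank_quotient_le_of_X_pow_mem (X_pow_mul_mem_pow hD k)
  rw [Fintype.card_fin] at hrank
  rw [div_le_iff₀ (by positivity)]
  calc (n ! * finrank K (MvPolynomial (Fin n) K ⧸ a ^ k) : ℝ) ≤ n ! * ((D * k) ^ n : ℕ) := by
        gcongr
    _ = n ! * (D : ℝ) ^ n * (k : ℝ) ^ n := by push_cast; ring

theorem le_polyMult {D : ℕ} (hD : ∀ i, X i ^ D ∈ a) {c : ℝ}
    (hc : ∀ k : ℕ, 1 ≤ k →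
      c ≤ (n ! * finrank K (MvPolynomial (Fin n) K ⧸ a ^ k) : ℝ) / (k : ℝ) ^ n) :
    c ≤ polyMult a :=
  le_limsup_of_frequently_le (eventually_atTop.2 ⟨1, hc⟩).frequently
    (isBoundedUnder_factorial_mul_finrank_div hD)

theorem inv_prod_le_factorial_mul_finrank_div (hmon : IsMonomialIdeal a) {D : ℕ}
    (hD : ∀ i, X i ^ D ∈ a) {μ : Fin n → ℝ} (hμ : ∀ i, 0 < μ i)
    (hμa : ∀ v : Fin n →₀ ℕ, monomial v (1 : K) ∈ a → 1 ≤ Finsupp.weight μ v)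
    {k : ℕ} (hk : 1 ≤ k) :
    (∏ i, μ i)⁻¹ ≤ (n ! * finrank K (MvPolynomial (Fin n) K ⧸ a ^ k) : ℝ) / (k : ℝ) ^ n := by
  have := finite_quotient_of_X_pow_mem (K := K) (X_pow_mul_mem_pow hD k)
  have hpow := mem_restrictSupport_of_mem_pow (fun i => (hμ i).le)
    (hmon.mem_restrictSupport (fun i => (hμ i).le) hμa) k
  have hcount : (latticeSimplex μ k).ncard ≤ finrank K (MvPolynomial (Fin n) K ⧸ a ^ k) := by
    rw [← Set.ncard_preimage_of_injective_subset_range DFunLike.coe_injective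
      fun u _ => ⟨Finsupp.equivFunOnFinite.symm u, rfl⟩]
    refine ncard_le_finrank_quotient fun f hf hfS => ?_
    by_contra hf0
    obtain ⟨u, hu⟩ := support_nonempty.2 hf0
    have hweight : (k : ℝ) ≤ ∑ i, μ i * u i := Finsupp.weight_eq_sum_mul μ u ▸ hpow f hf hu
    exact (hfS hu).not_ge hweight
  have hprod : 0 < ∏ i, μ i := Finset.prod_pos fun i _ => hμ i
  rw [le_div_iff₀ (by positivity), inv_mul_le_iff₀ hprod]
  calc (k : ℝ) ^ n ≤ n ! * (∏ i, μ i) * (latticeSimplex μ k).ncard :=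
        pow_le_factorial_mul_prod_mul_ncard_latticeSimplex hμ (by positivity)
    _ ≤ n ! * (∏ i, μ i) * finrank K (MvPolynomial (Fin n) K ⧸ a ^ k) := by gcongr
    _ = (∏ i, μ i) * (n ! * finrank K (MvPolynomial (Fin n) K ⧸ a ^ k)) := by ring

theorem pow_mul_le_inv_prod {μ : Fin n → ℝ} (hμ : ∀ i, 0 < μ i) {s : ℝ} (hs : 0 ≤ s)
    (h : ∑ i, μ i * s ≤ 1) : ((n : ℝ) * s) ^ n ≤ (∏ i, μ i)⁻¹ := by
  have hprod : 0 < ∏ i, μ i := Finset.prod_pos fun i _ => hμ i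
  rw [← one_div, le_div_iff₀ hprod]
  calc ((n : ℝ) * s) ^ n * ∏ i, μ i ≤ ((n : ℝ) * s) ^ n * ((∑ i, μ i) / n) ^ n := by
        gcongr
        simpa using prod_le_sum_div_card_pow Finset.univ fun i _ => (hμ i).le
    _ = (∑ i, μ i * s) ^ n := by
        rcases n.eq_zero_or_pos with rfl | hn
        · simp
        rw [← mul_pow, ← Finset.sum_mul]
        field_simp
    _ ≤ 1 := pow_le_one₀ (Finset.sum_nonneg fun i _ => mul_nonneg (hμ i).le hs) h

theorem pow_mul_le_polyMult (hmon : IsMonomialIdeal a) {D : ℕ} (hD : ∀ i, X i ^ D ∈ a)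
    {s : ℝ} (hs : 0 ≤ s) (hsa : (fun _ : Fin n => s) ∉ closure (newton a)) :
    ((n : ℝ) * s) ^ n ≤ polyMult a := by
  obtain ⟨μ, hμ, hμa, hμs⟩ := exists_pos_weight_of_notMem_closure_newton hD (fun _ => hs) hsa
  have hμv : ∀ v : Fin n →₀ ℕ, monomial v (1 : K) ∈ a → 1 ≤ Finsupp.weight μ v := fun v hv =>
    Finsupp.weight_eq_sum_mul μ v ▸ hμa _ (subset_convexHull ℝ _ ⟨v, hv, rfl⟩)
  exact (pow_mul_le_inv_prod hμ hs hμs.le).trans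
    (le_polyMult hD fun k hk => inv_prod_le_factorial_mul_finrank_div hmon hD hμ hμv hk)

end Multiplicity

theorem polyMult_ge_pow_lc_general
    {K : Type*} [Field K] {n : ℕ} (hn : 1 ≤ n)
    (a : Ideal (MvPolynomial (Fin n) K))
    (hmon : IsMonomialIdeal a)
    (hsupp : SupportedAtOrigin a) :
    ((n : ℝ) * sInf {μ : ℝ | 0 < μ ∧ (fun _ : Fin n => μ) ∈ newton a}) ^ n
      ≤ polyMult a := by
  obtain ⟨D, hD⟩ := hsupp.exists_X_pow_mem
  set t := sInf {μ : ℝ | 0 < μ ∧ (fun _ : Fin n => μ) ∈ newton a}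
  have ht0 : 0 ≤ t := Real.sInf_nonneg fun μ hμ => hμ.1.le
  rcases ht0.eq_or_lt with ht | ht
  · rw [← ht, mul_zero, zero_pow (by omega)]
    exact le_polyMult hD fun k _ => by positivity
  · have hcont : Continuous fun s : ℝ => ((n : ℝ) * s) ^ n := by fun_prop
    refine le_of_tendsto (hcont.tendsto t |>.mono_left nhdsWithin_le_nhds)
      (mem_of_superset (Ioo_mem_nhdsLT ht) fun s hs => ?_)
    exact pow_mul_le_polyMult hmon hD hs.1.le (notMem_closure_newton_of_lt_sInf hs.1.le hs.2)

/-- For a proper monomial ideal `a` supported at the origin, with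
`t = inf{μ > 0 : μ·(1,…,1) ∈ P_a} = 1/lc(a)`, one has
`e(a) ≥ n^n/lc(a)^n = (n·t)^n`. -/
theorem polyMult_ge_pow_lc
    {K : Type*} [Field K] {n : ℕ} (hn : 1 ≤ n)
    (a : Ideal (MvPolynomial (Fin n) K)) (hne : a ≠ ⊤)
    (hmon : IsMonomialIdeal a)
    (hsupp : SupportedAtOrigin a) :
    ((n : ℝ) * sInf {μ : ℝ | 0 < μ ∧ (fun _ : Fin n => μ) ∈ newton a}) ^ n
      ≤ polyMult a :=
  polyMult_ge_pow_lc_general hn a hmon hsupp
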